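/- arXiv:2205.03328 — 2 statements merged into one kernel-verified Lean document; each statement's English description precedes it below -/
import Mathlib

section
/- Let D : {1,...,n0} → ℝ satisfy the corner-set recursion D_{n0} = λs·n/(n0·λ) and D_k = (λs + (λ/2)·D_{k+1})/(k·λ/n + λ/2) for 1 ≤ k ≤ n0−1. Then D_1 = (2λs/λ)·[ Σ_{j=1}^{n0−1} Π_{k=1}^{j} 1/(2k/n + 1) + (n/(2n0))·Π_{k=1}^{n0−1} 1/(2k/n + 1) ]. -/
open Finset

/-!
Dividing the recursion by `λ/2` puts it in the form `D k = a k * (c + D (k + 1))` with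
`a k = 1 / (2k/n + 1)` and `c = 2λs/λ`. Unrolling this first-order linear recursion from `k = 1`
up to `k = n0` gives
`D 1 = c * ∑_{1 ≤ j < n0} ∏_{1 ≤ k ≤ j} a k + (∏_{1 ≤ k < n0} a k) * D n0`, and the boundary value
is `D n0 = c * n / (2 n0)`.
-/

theorem eq_sum_prod_add_prod_mul_of_eq_mul_add {R : Type*} [CommSemiring R]
    (a x : ℕ → R) (c : R) {m N : ℕ} (hmN : m ≤ N)
    (hx : ∀ k, m ≤ k → k < N → x k = a k * (c + x (k + 1))) :
    x m = c * ∑ j ∈ Ico m N, ∏ i ∈ Icc m j, a i + (∏ i ∈ Ico m N, a i) * x N := by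
  induction N, hmN using Nat.le_induction with
  | base => simp
  | succ N hmN ih =>
    rw [ih fun k hmk hkN => hx k hmk (by omega), hx N hmN N.lt_succ_self,
      sum_Ico_succ_top hmN, prod_Ico_succ_top hmN, ← Ico_add_one_right_eq_Icc,
      prod_Ico_succ_top hmN]
    ring

theorem line_corner_age_closed_form_general
    (n0 : ℕ) (lamS lam n : ℝ)
    (hn0 : 0 < n0) (hlam : 0 < lam)
    (D : ℕ → ℝ)
    (hfull : D n0 = lamS * n / ((n0 : ℝ) * lam))
    (hrec : ∀ k : ℕ, 1 ≤ k → k + 1 ≤ n0 →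
      D k = (lamS + (lam / 2) * D (k + 1)) / ((k : ℝ) * lam / n + lam / 2)) :
    D 1 = (2 * lamS / lam) *
      ((∑ j ∈ Finset.Icc 1 (n0 - 1), ∏ k ∈ Finset.Icc 1 j, 1 / (2 * (k : ℝ) / n + 1))
        + (n / (2 * (n0 : ℝ))) * ∏ k ∈ Finset.Icc 1 (n0 - 1), 1 / (2 * (k : ℝ) / n + 1)) := by
  have hstep : ∀ k, 1 ≤ k → k < n0 →
      D k = 1 / (2 * (k : ℝ) / n + 1) * (2 * lamS / lam + D (k + 1)) := by
    intro k hk hkn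
    rw [hrec k hk hkn, show (k : ℝ) * lam / n + lam / 2 = lam / 2 * (2 * k / n + 1) by ring,
      ← div_div, one_div_mul_eq_div]
    congr 1
    field_simp
  have hIcc : Icc 1 (n0 - 1) = Ico 1 n0 :=
    Icc_sub_one_right_eq_Ico_of_not_isMin (by simpa using hn0.ne') 1
  rw [eq_sum_prod_add_prod_mul_of_eq_mul_add _ D _ hn0 hstep, hfull, hIcc]
  field_simp

/-- Closed form for the corner-node version age in a line network of `n0` gossiping nodes: if
`D : {1,…,n0} → ℝ` satisfies the corner-set recursion `D n0 = lamS·n/(n0·lam)` and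
`D k = (lamS + (lam/2)·D (k+1)) / (k·lam/n + lam/2)` for `1 ≤ k ≤ n0 - 1`, then
`D 1 = (2·lamS/lam)·[ Σ_{j=1}^{n0-1} Π_{k=1}^{j} 1/(2k/n+1) + (n/(2n0))·Π_{k=1}^{n0-1} 1/(2k/n+1) ]`. -/
theorem line_corner_age_closed_form
    (n0 : ℕ) (lamS lam n : ℝ)
    (hn0 : 0 < n0) (hlamS : 0 < lamS) (hlam : 0 < lam) (hn : 0 < n)
    (D : ℕ → ℝ)
    (hfull : D n0 = lamS * n / ((n0 : ℝ) * lam))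
    (hrec : ∀ k : ℕ, 1 ≤ k → k + 1 ≤ n0 →
      D k = (lamS + (lam / 2) * D (k + 1)) / ((k : ℝ) * lam / n + lam / 2)) :
    D 1 = (2 * lamS / lam) *
      ((∑ j ∈ Finset.Icc 1 (n0 - 1), ∏ k ∈ Finset.Icc 1 j, 1 / (2 * (k : ℝ) / n + 1))
        + (n / (2 * (n0 : ℝ))) * ∏ k ∈ Finset.Icc 1 (n0 - 1), 1 / (2 * (k : ℝ) / n + 1)) :=
  line_corner_age_closed_form_general n0 lamS lam n hn0 hlam D hfull hrec
end

section
/- Define f(n0) = n0·F(n, n0). Then for all positive integers m and n0 with 2m + 1 ≤ n0, one has f(m+1) + f(n0−m−1) ≤ f(m) + f(n0−m). That is, when a total of n0 nodes is split into two disjoint rings of sizes m and n0−m, making the split more balanced (moving to sizes m+1 and n0−m−1) does not increase the total version age. -/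
open Finset

/-- Closed-form stationary version age of a single node in a ring of `n0` gossiping nodes
(source rate `lamS`, per-node update rate `lam/n`, per-link rate `lam/2`). -/
noncomputable def ringNodeAge (lamS lam n : ℝ) (n0 : ℕ) : ℝ :=
  (lamS / lam) *
    ((∑ j ∈ Finset.Icc 1 (n0 - 1), ∏ k ∈ Finset.Icc 1 j, 1 / ((k : ℝ) / n + 1))
      + (n / (n0 : ℝ)) * ∏ k ∈ Finset.Icc 1 (n0 - 1), 1 / ((k : ℝ) / n + 1))

/-- Sum of version ages over the `n0` nodes of a ring. -/
noncomputable def ringSumAge (lamS lam n : ℝ) (n0 : ℕ) : ℝ :=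
  (n0 : ℝ) * ringNodeAge lamS lam n n0

/-! For `k ≥ 1` the increment `f(k+1) - f(k)` equals `(λs/λ) · Σ_{j=1}^{k} w_j` with
`w_j = Π_{i=1}^{j} n/(i+n) > 0`, so the increments of `f` are nondecreasing from `k = 1` on.
Moving one node from the ring of size `n0 - m ≥ m + 1` to the ring of size `m` therefore loses
at least as much as it gains. -/

noncomputable def ringWeight (n : ℝ) (j : ℕ) : ℝ :=
  ∏ k ∈ Icc 1 j, 1 / ((k : ℝ) / n + 1)

noncomputable def ringWeightSum (n : ℝ) (j : ℕ) : ℝ :=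
  ∑ i ∈ Icc 1 j, ringWeight n i

lemma ringWeight_pos {n : ℝ} (hn : 0 < n) (j : ℕ) : 0 < ringWeight n j :=
  prod_pos fun k _ => by positivity

lemma add_mul_ringWeight_succ {n : ℝ} (hn : 0 < n) (k : ℕ) :
    ((k : ℝ) + 1 + n) * ringWeight n (k + 1) = n * ringWeight n k := by
  rw [ringWeight, prod_Icc_succ_top (Nat.le_add_left 1 k), ← ringWeight]
  push_cast
  field_simp

lemma ringWeightSum_succ (n : ℝ) (k : ℕ) :
    ringWeightSum n (k + 1) = ringWeightSum n k + ringWeight n (k + 1) :=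
  sum_Icc_succ_top (Nat.le_add_left 1 k) _

lemma ringWeightSum_mono {n : ℝ} (hn : 0 < n) : Monotone (ringWeightSum n) := fun _ _ hij =>
  sum_le_sum_of_subset_of_nonneg (Icc_subset_Icc_right hij)
    fun j _ _ => (ringWeight_pos hn j).le

lemma ringSumAge_succ (lamS lam n : ℝ) (k : ℕ) :
    ringSumAge lamS lam n (k + 1)
      = lamS / lam * (((k : ℝ) + 1) * ringWeightSum n k + n * ringWeight n k) := by
  simp only [ringSumAge, ringNodeAge, ringWeightSum, ringWeight, Nat.add_sub_cancel]
  push_cast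
  field_simp

lemma ringSumAge_succ_sub {lamS lam n : ℝ} (hn : 0 < n) {k : ℕ} (hk : 0 < k) :
    ringSumAge lamS lam n (k + 1) - ringSumAge lamS lam n k = lamS / lam * ringWeightSum n k := by
  obtain ⟨l, rfl⟩ := Nat.exists_eq_add_of_lt hk
  simp only [zero_add, ringSumAge_succ, ringWeightSum_succ]
  push_cast
  linear_combination lamS / lam * add_mul_ringWeight_succ hn l

/-- When a total of `n0` nodes is split into two disjoint rings of sizes `m` and `n0 - m`
with `2m + 1 ≤ n0`, making the split more balanced (sizes `m+1` and `n0-m-1`) does not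
increase the total version age: `f(m+1) + f(n0-m-1) ≤ f(m) + f(n0-m)`. -/
theorem balanced_split_age_le
    (lamS lam n : ℝ) (hlamS : 0 < lamS) (hlam : 0 < lam) (hn : 0 < n)
    (m n0 : ℕ) (hm : 0 < m) (hsplit : 2 * m + 1 ≤ n0) :
    ringSumAge lamS lam n (m + 1) + ringSumAge lamS lam n (n0 - m - 1)
      ≤ ringSumAge lamS lam n m + ringSumAge lamS lam n (n0 - m) := by
  have hmb : m ≤ n0 - m - 1 := by omega
  have hlarge : n0 - m - 1 + 1 = n0 - m := by omega
  have hsmall_step := ringSumAge_succ_sub (lamS := lamS) (lam := lam) hn hm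
  have hlarge_step := ringSumAge_succ_sub (lamS := lamS) (lam := lam) hn (hm.trans_le hmb)
  have hweights : lamS / lam * ringWeightSum n m ≤ lamS / lam * ringWeightSum n (n0 - m - 1) :=
    mul_le_mul_of_nonneg_left (ringWeightSum_mono hn hmb) (div_pos hlamS hlam).le
  rw [hlarge] at hlarge_step
  linarith
end
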